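/- Let α : ℝ → ℝ be given by α(t) = t − 1, and let w be a continuous bounded positive function on ℝ for which there exist constants M, δ, K₁, K₂ > 0 such that 1 < M − δ ≤ w(t) ≤ M for all t ≤ −K₁ and w(t) = 1 for all t ≥ K₂. Then the weighted composition operator T̃_{α,w} on C₀(ℝ), defined by T̃_{α,w}(f) = w·(f∘α), is topologically Cesàro hyper-transitive on C₀(ℝ). -/

import Mathlib

/-!
Write `W n t = w t * w (t - 1) * ⋯ * w (t - (n - 1))`, so that `(T ^ n) f t = W n t * f (t - n)`.
If `f` has compact support, the factors of `W n t` met on the support of `(T ^ n) f` all lie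
where `w = 1`, except for boundedly many, so the orbit of `f` is bounded and
`n⁻¹ • T ^ n f → 0`. If `g` has compact support, then `g = T ^ n v` for
`v t = g (t + n) / W n (t + n)`, and on the support of `v` all but boundedly many factors of
`W n` lie where `w ≥ M - δ > 1`; hence `‖n • v‖ = O(n (M - δ)⁻ⁿ) → 0`. So `f + n • v` is close
to `f` while `n⁻¹ • T ^ n (f + n • v)` tends to `g`, and compactly supported functions are
dense in `C₀(ℝ, ℂ)`.
-/

open scoped ZeroAtInfty

/-- A bounded linear operator `T` on a normed space is *topologically Cesàro
hyper-transitive* if for every pair of nonempty open subsets `O₁, O₂` there exists a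
strictly increasing sequence `(n_k)` of (positive) natural numbers such that
`n_k⁻¹ • T^{n_k}(O₁) ∩ O₂ ≠ ∅` for all `k`. -/
def IsCesaroHyperTransitive {E : Type*} [NormedAddCommGroup E] [NormedSpace ℂ E]
    (T : E →L[ℂ] E) : Prop :=
  ∀ O₁ O₂ : Set E, IsOpen O₁ → IsOpen O₂ → O₁.Nonempty → O₂.Nonempty →
    ∃ n : ℕ → ℕ, StrictMono n ∧ (∀ k, 1 ≤ n k) ∧
      ∀ k, ∃ f ∈ O₁, ((n k : ℂ))⁻¹ • (T ^ n k) f ∈ O₂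

open Filter Topology Finset
open scoped CompactlySupported

theorem isCesaroHyperTransitive_of_dense {E : Type*} [NormedAddCommGroup E] [NormedSpace ℂ E]
    (T : E →L[ℂ] E) {D₁ D₂ : Set E} (hD₁ : Dense D₁) (hD₂ : Dense D₂)
    (h₁ : ∀ x ∈ D₁, Tendsto (fun n : ℕ ↦ (n : ℂ)⁻¹ • (T ^ n) x) atTop (𝓝 0))
    (h₂ : ∀ y ∈ D₂, ∃ u : ℕ → E, Tendsto u atTop (𝓝 0) ∧
      Tendsto (fun n : ℕ ↦ (n : ℂ)⁻¹ • (T ^ n) (u n)) atTop (𝓝 y)) :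
    IsCesaroHyperTransitive T := by
  intro O₁ O₂ hO₁ hO₂ hne₁ hne₂
  obtain ⟨x, hxO, hxD⟩ := hD₁.inter_open_nonempty O₁ hO₁ hne₁
  obtain ⟨y, hyO, hyD⟩ := hD₂.inter_open_nonempty O₂ hO₂ hne₂
  obtain ⟨u, hu, hTu⟩ := h₂ y hyD
  have hx : Tendsto (fun n ↦ x + u n) atTop (𝓝 x) := by
    simpa using tendsto_const_nhds.add hu
  have hy : Tendsto (fun n : ℕ ↦ (n : ℂ)⁻¹ • (T ^ n) (x + u n)) atTop (𝓝 y) := by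
    simpa [smul_add] using (h₁ x hxD).add hTu
  obtain ⟨φ, hφ, hP⟩ := extraction_of_eventually_atTop <| (eventually_ge_atTop 1).and <|
    (hx.eventually (hO₁.mem_nhds hxO)).and (hy.eventually (hO₂.mem_nhds hyO))
  exact ⟨φ, hφ, fun k ↦ (hP k).1, fun k ↦ ⟨_, (hP k).2.1, (hP k).2.2⟩⟩

theorem tendsto_inv_natCast_smul_of_eventually_norm_le {𝕜 E : Type*} [RCLike 𝕜]
    [NormedAddCommGroup E] [NormedSpace 𝕜 E] {v : ℕ → E} {B : ℝ}
    (hv : ∀ᶠ n in atTop, ‖v n‖ ≤ B) :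
    Tendsto (fun n : ℕ ↦ (n : 𝕜)⁻¹ • v n) atTop (𝓝 0) := by
  refine squeeze_zero_norm' ?_ (tendsto_const_div_atTop_nhds_zero_nat B)
  filter_upwards [hv] with n hn
  rw [norm_smul, norm_inv, RCLike.norm_natCast, inv_mul_eq_div]
  exact div_le_div_of_nonneg_right hn n.cast_nonneg

theorem exists_pos_forall_le_of_one_le_off_compact {X : Type*} [TopologicalSpace X]
    {w : X → ℝ} (hw : Continuous w) (hpos : ∀ x, 0 < w x) {K : Set X} (hK : IsCompact K)
    (hout : ∀ x ∉ K, 1 ≤ w x) : ∃ c > 0, ∀ x, c ≤ w x := by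
  obtain ⟨c, hc, hcK⟩ := hK.exists_forall_le' hw.continuousOn fun x _ ↦ hpos x
  refine ⟨min c 1, lt_min hc one_pos, fun x ↦ ?_⟩
  by_cases hx : x ∈ K
  · exact (min_le_left _ _).trans (hcK x hx)
  · exact (min_le_right _ _).trans (hout x hx)

theorem HasCompactSupport.exists_eq_zero_of_lt_norm {E β : Type*} [SeminormedAddCommGroup E]
    [Zero β] {f : E → β} (hf : HasCompactSupport f) : ∃ R, ∀ x, R < ‖x‖ → f x = 0 := by
  obtain ⟨R, hR⟩ := hf.isCompact.isBounded.subset_closedBall 0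
  refine ⟨R, fun x hx ↦ image_eq_zero_of_notMem_tsupport fun h ↦ ?_⟩
  exact hx.not_ge (mem_closedBall_zero_iff.1 (hR h))

namespace ZeroAtInftyContinuousMap

variable {X E : Type*} [TopologicalSpace X]

theorem norm_le_iff_forall [SeminormedAddCommGroup E] {f : C₀(X, E)} {C : ℝ} (hC : 0 ≤ C) :
    ‖f‖ ≤ C ↔ ∀ x, ‖f x‖ ≤ C := by
  rw [← norm_toBCF_eq_norm]
  exact BoundedContinuousFunction.norm_le hC

theorem norm_apply_le [SeminormedAddCommGroup E] (f : C₀(X, E)) (x : X) : ‖f x‖ ≤ ‖f‖ :=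
  (norm_le_iff_forall (norm_nonneg f)).1 le_rfl x

theorem dense_setOf_hasCompactSupport [RegularSpace X] [LocallyCompactSpace X]
    [NormedAddCommGroup E] [NormedSpace ℝ E] : Dense {f : C₀(X, E) | HasCompactSupport f} := by
  refine Metric.dense_iff.2 fun f ε hε ↦ ?_
  have hK : IsCompact {x | ε / 2 ≤ ‖f x‖} := by
    obtain ⟨K, hK, hKf⟩ := mem_cocompact.1 <|
      (tendsto_zero_iff_norm_tendsto_zero.1 (zero_at_infty f)).eventually
        (gt_mem_nhds (half_pos hε))
    refine hK.of_isClosed_subset (isClosed_le continuous_const (map_continuous f).norm)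
      fun x hx ↦ ?_
    by_contra h
    exact (show ‖f x‖ < ε / 2 from hKf h).not_ge hx
  obtain ⟨χ, hχ1, -, hχ, hχ01⟩ :=
    exists_continuous_one_zero_of_isCompact hK isClosed_empty (Set.disjoint_empty _)
  let g : C_c(X, E) := ⟨⟨fun x ↦ χ x • f x, by fun_prop⟩, hχ.smul_right (f' := f)⟩
  refine ⟨g, ?_, g.hasCompactSupport⟩
  rw [Metric.mem_ball, dist_comm, dist_eq_norm]
  refine ((norm_le_iff_forall (half_pos hε).le).2 fun x ↦ ?_).trans_lt (half_lt_self hε)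
  have hfg : (f - g) x = (1 - χ x) • f x := by simp [g, sub_smul]
  rw [hfg, norm_smul, Real.norm_of_nonneg (sub_nonneg.2 (hχ01 x).2)]
  by_cases hx : ε / 2 ≤ ‖f x‖
  · simpa [hχ1 hx] using (half_pos hε).le
  · calc (1 - χ x) * ‖f x‖ ≤ 1 * ‖f x‖ := by gcongr; linarith [(hχ01 x).1]
      _ ≤ ε / 2 := by linarith

end ZeroAtInftyContinuousMap

noncomputable def weightProd (w : ℝ → ℝ) (n : ℕ) (t : ℝ) : ℝ := ∏ j ∈ range n, w (t - j)

section WeightProd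

variable {w : ℝ → ℝ}

theorem weightProd_add (k n : ℕ) (t : ℝ) :
    weightProd w (k + n) t = weightProd w k t * weightProd w n (t - k) := by
  simp only [weightProd, prod_range_add, Nat.cast_add, sub_sub]

theorem weightProd_one (t : ℝ) : weightProd w 1 t = w t := by
  simp [weightProd]

theorem weightProd_pos (hw : ∀ t, 0 < w t) (n : ℕ) (t : ℝ) : 0 < weightProd w n t :=
  prod_pos fun _ _ ↦ hw _

theorem weightProd_nonneg (hw : ∀ t, 0 ≤ w t) (n : ℕ) (t : ℝ) : 0 ≤ weightProd w n t :=
  prod_nonneg fun _ _ ↦ hw _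

theorem continuous_weightProd (hw : Continuous w) (n : ℕ) : Continuous (weightProd w n) :=
  continuous_finsetProd _ fun _ _ ↦ hw.comp (continuous_sub_right _)

theorem pow_le_weightProd {c : ℝ} (hc : 0 ≤ c) {n : ℕ} {t : ℝ}
    (h : ∀ j < n, c ≤ w (t - j)) : c ^ n ≤ weightProd w n t :=
  calc c ^ n = ∏ _j ∈ range n, c := by simp
    _ ≤ weightProd w n t := prod_le_prod (fun _ _ ↦ hc) fun j hj ↦ h j (mem_range.1 hj)

theorem weightProd_le_pow {C : ℝ} {n : ℕ} {t : ℝ} (h₀ : ∀ j < n, 0 ≤ w (t - j))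
    (h : ∀ j < n, w (t - j) ≤ C) : weightProd w n t ≤ C ^ n :=
  calc weightProd w n t ≤ ∏ _j ∈ range n, C :=
        prod_le_prod (fun j hj ↦ h₀ j (mem_range.1 hj)) fun j hj ↦ h j (mem_range.1 hj)
    _ = C ^ n := by simp

theorem weightProd_le_pow_of_eq_one_of_ge {C K : ℝ} (h₀ : ∀ s, 0 ≤ w s) (hC : ∀ s, w s ≤ C)
    (h₁ : ∀ s ≥ K, w s = 1) {m n : ℕ} (hmn : m ≤ n) {t : ℝ} (ht : K ≤ t - n + m) :
    weightProd w n t ≤ C ^ m := by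
  obtain ⟨k, rfl⟩ := Nat.exists_eq_add_of_le' hmn
  have hk : weightProd w k t = 1 := prod_eq_one fun j hj ↦ h₁ _ <| by
    have : (j : ℝ) < k := by exact_mod_cast mem_range.1 hj
    push_cast at ht
    linarith
  rw [weightProd_add, hk, one_mul]
  exact weightProd_le_pow (fun _ _ ↦ h₀ _) fun _ _ ↦ hC _

-- `(c / L) ^ m * L ^ n` is `c ^ m * L ^ (n - m)`, written without truncated subtraction.
theorem div_pow_mul_pow_le_weightProd {c L K : ℝ} (hc : 0 ≤ c) (hL : 0 < L)
    (hcw : ∀ s, c ≤ w s) (hLw : ∀ s ≤ K, L ≤ w s) {m n : ℕ} (hmn : m ≤ n) {t : ℝ}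
    (ht : t - m ≤ K) : (c / L) ^ m * L ^ n ≤ weightProd w n t := by
  obtain ⟨k, rfl⟩ := Nat.exists_eq_add_of_le hmn
  rw [weightProd_add, pow_add, ← mul_assoc, div_pow, div_mul_cancel₀ _ (pow_ne_zero _ hL.ne')]
  have hm : c ^ m ≤ weightProd w m t := pow_le_weightProd hc fun _ _ ↦ hcw _
  have hk : L ^ k ≤ weightProd w k (t - m) :=
    pow_le_weightProd hL.le fun j _ ↦ hLw _ (by linarith [(j.cast_nonneg : (0 : ℝ) ≤ j)])
  exact mul_le_mul hm hk (pow_nonneg hL.le _) ((pow_nonneg hc _).trans hm)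

end WeightProd

section WeightedShift

open ZeroAtInftyContinuousMap

variable {w : ℝ → ℝ} {T : C₀(ℝ, ℂ) →L[ℂ] C₀(ℝ, ℂ)}

theorem pow_apply_eq_weightProd_mul (hT : ∀ f t, T f t = (w t : ℂ) * f (t - 1))
    (n : ℕ) (f : C₀(ℝ, ℂ)) (t : ℝ) : (T ^ n) f t = weightProd w n t * f (t - n) := by
  induction n generalizing t with
  | zero => simp [weightProd]
  | succ n ih =>
    rw [pow_succ', mul_apply_eq_comp, hT, ih, add_comm n 1, weightProd_add,
      weightProd_one]
    push_cast
    ring_nf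

theorem norm_pow_apply_le (hT : ∀ f t, T f t = (w t : ℂ) * f (t - 1)) {C K R : ℝ}
    (h₀ : ∀ s, 0 ≤ w s) (hC : ∀ s, w s ≤ C) (h₁ : ∀ s ≥ K, w s = 1) {f : C₀(ℝ, ℂ)}
    (hf : ∀ s < -R, f s = 0) {m n : ℕ} (hm : R + K ≤ m) (hmn : m ≤ n) :
    ‖(T ^ n) f‖ ≤ C ^ m * ‖f‖ := by
  have hCm : 0 ≤ C ^ m := pow_nonneg ((h₀ 0).trans (hC 0)) m
  refine (norm_le_iff_forall (by positivity)).2 fun t ↦ ?_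
  rw [pow_apply_eq_weightProd_mul hT, norm_mul, Complex.norm_real,
    Real.norm_of_nonneg (weightProd_nonneg h₀ n t)]
  rcases lt_or_ge (t - n) (-R) with ht | ht
  · simpa [hf _ ht] using mul_nonneg hCm (norm_nonneg f)
  · exact mul_le_mul (weightProd_le_pow_of_eq_one_of_ge h₀ hC h₁ hmn (by linarith))
      (norm_apply_le f _) (norm_nonneg _) hCm

theorem tendsto_inv_smul_pow_apply_of_hasCompactSupport
    (hT : ∀ f t, T f t = (w t : ℂ) * f (t - 1)) {C K : ℝ} (h₀ : ∀ s, 0 ≤ w s)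
    (hC : ∀ s, w s ≤ C) (h₁ : ∀ s ≥ K, w s = 1) {f : C₀(ℝ, ℂ)} (hf : HasCompactSupport f) :
    Tendsto (fun n : ℕ ↦ (n : ℂ)⁻¹ • (T ^ n) f) atTop (𝓝 0) := by
  obtain ⟨R, hR⟩ := hf.exists_eq_zero_of_lt_norm
  have hf' : ∀ s < -R, f s = 0 := fun s hs ↦
    hR s (by rw [Real.norm_eq_abs]; linarith [neg_le_abs s])
  refine tendsto_inv_natCast_smul_of_eventually_norm_le (B := C ^ ⌈R + K⌉₊ * ‖f‖) ?_
  filter_upwards [eventually_ge_atTop ⌈R + K⌉₊] with n hn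
  exact norm_pow_apply_le hT h₀ hC h₁ hf' (Nat.le_ceil _) hn

theorem exists_pow_apply_eq (hT : ∀ f t, T f t = (w t : ℂ) * f (t - 1)) (hw : Continuous w)
    (hpos : ∀ t, 0 < w t) {g : C₀(ℝ, ℂ)} (hg : HasCompactSupport g) (n : ℕ) :
    ∃ v : C₀(ℝ, ℂ), (T ^ n) v = g ∧ ∀ t, ‖v t‖ = ‖g (t + n)‖ / weightProd w n (t + n) := by
  have hW : ∀ t, (weightProd w n t : ℂ) ≠ 0 := fun t ↦
    Complex.ofReal_ne_zero.2 (weightProd_pos hpos n t).ne'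
  have hcont : Continuous fun t ↦ (weightProd w n (t + n) : ℂ)⁻¹ * g (t + n) :=
    ((Complex.continuous_ofReal.comp ((continuous_weightProd hw n).comp
      (continuous_add_const _))).inv₀ fun t ↦ hW _).mul
      ((map_continuous g).comp (continuous_add_const _))
  have hsupp : HasCompactSupport fun t ↦ (weightProd w n (t + n) : ℂ)⁻¹ * g (t + n) :=
    (hg.comp_homeomorph (Homeomorph.addRight (n : ℝ))).mul_left
  refine ⟨⟨⟨_, hcont⟩, hsupp.is_zero_at_infty⟩, ?_, fun t ↦ ?_⟩
  · ext t
    rw [pow_apply_eq_weightProd_mul hT]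
    change (weightProd w n t : ℂ) * ((weightProd w n (t - n + n) : ℂ)⁻¹ * g (t - n + n)) = g t
    rw [sub_add_cancel, mul_inv_cancel_left₀ (hW t)]
  · change ‖(weightProd w n (t + n) : ℂ)⁻¹ * g (t + n)‖ = _
    rw [norm_mul, norm_inv, Complex.norm_real, Real.norm_of_nonneg
      (weightProd_pos hpos n _).le, inv_mul_eq_div]

theorem norm_le_div_of_norm_apply_eq {c L K B : ℝ} (hc : 0 < c) (hL : 0 < L)
    (hcw : ∀ s, c ≤ w s) (hLw : ∀ s ≤ K, L ≤ w s) {g v : C₀(ℝ, ℂ)} (hg : ∀ s, B < s → g s = 0)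
    {m n : ℕ} (hm : B - K ≤ m) (hmn : m ≤ n)
    (hv : ∀ t, ‖v t‖ = ‖g (t + n)‖ / weightProd w n (t + n)) :
    ‖v‖ ≤ ‖g‖ / ((c / L) ^ m * L ^ n) := by
  have hden : 0 < (c / L) ^ m * L ^ n := by positivity
  refine (norm_le_iff_forall (by positivity)).2 fun t ↦ ?_
  rw [hv]
  rcases lt_or_ge B (t + n) with ht | ht
  · simpa [hg _ ht] using div_nonneg (norm_nonneg g) hden.le
  · exact div_le_div₀ (norm_nonneg g) (norm_apply_le g _) hden
      (div_pow_mul_pow_le_weightProd hc.le hL hcw hLw hmn (by linarith))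

theorem exists_tendsto_inv_smul_pow_apply (hT : ∀ f t, T f t = (w t : ℂ) * f (t - 1))
    (hw : Continuous w) (hpos : ∀ t, 0 < w t) {c L K : ℝ} (hc : 0 < c) (hL : 1 < L)
    (hcw : ∀ s, c ≤ w s) (hLw : ∀ s ≤ K, L ≤ w s) {g : C₀(ℝ, ℂ)} (hg : HasCompactSupport g) :
    ∃ u : ℕ → C₀(ℝ, ℂ), Tendsto u atTop (𝓝 0) ∧
      Tendsto (fun n : ℕ ↦ (n : ℂ)⁻¹ • (T ^ n) (u n)) atTop (𝓝 g) := by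
  choose v hTv hv using exists_pow_apply_eq hT hw hpos hg
  obtain ⟨B, hB⟩ := hg.exists_eq_zero_of_lt_norm
  have hg' : ∀ s, B < s → g s = 0 := fun s hs ↦ hB s (hs.trans_le (le_abs_self s))
  set m := ⌈B - K⌉₊
  refine ⟨fun n ↦ (n : ℂ) • v n, ?_, ?_⟩
  · have hlim := (tendsto_pow_const_div_const_pow_of_one_lt 1 hL).const_mul (‖g‖ / (c / L) ^ m)
    rw [mul_zero] at hlim
    refine squeeze_zero_norm' ?_ hlim
    filter_upwards [eventually_ge_atTop m] with n hn
    have hvn := norm_le_div_of_norm_apply_eq hc (by linarith) hcw hLw hg' (Nat.le_ceil _) hn (hv n)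
    rw [norm_smul, Complex.norm_natCast, pow_one]
    calc (n : ℝ) * ‖v n‖ ≤ n * (‖g‖ / ((c / L) ^ m * L ^ n)) := by gcongr
      _ = ‖g‖ / (c / L) ^ m * (n / L ^ n) := by ring
  · refine tendsto_const_nhds.congr' ?_
    filter_upwards [eventually_ge_atTop 1] with n hn
    rw [map_smul, hTv, inv_smul_smul₀ (Nat.cast_ne_zero.2 (by omega))]

end WeightedShift

theorem cesaro_hyper_transitive_of_weight_general
    (w : ℝ → ℝ) (hw_cont : Continuous w) (hw_pos : ∀ t, 0 < w t)
    (hw_bdd : ∃ C, ∀ t, w t ≤ C)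
    (M δ K₁ K₂ : ℝ)
    (hMδ : 1 < M - δ)
    (hlow : ∀ t ≤ -K₁, M - δ ≤ w t ∧ w t ≤ M)
    (hhigh : ∀ t ≥ K₂, w t = 1)
    (T : C₀(ℝ, ℂ) →L[ℂ] C₀(ℝ, ℂ))
    (hT : ∀ (f : C₀(ℝ, ℂ)) (t : ℝ), T f t = (w t : ℂ) * f (t - 1)) :
    IsCesaroHyperTransitive T := by
  obtain ⟨C, hC⟩ := hw_bdd
  have hout : ∀ t ∉ Set.Icc (-K₁) K₂, 1 ≤ w t := fun t ht ↦ by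
    rcases not_and_or.1 ht with ht | ht
    · linarith [(hlow t (not_le.1 ht).le).1]
    · exact (hhigh t (not_le.1 ht).le).ge
  obtain ⟨c, hc, hcw⟩ :=
    exists_pos_forall_le_of_one_le_off_compact hw_cont hw_pos isCompact_Icc hout
  exact isCesaroHyperTransitive_of_dense T ZeroAtInftyContinuousMap.dense_setOf_hasCompactSupport
    ZeroAtInftyContinuousMap.dense_setOf_hasCompactSupport
    (fun f hf ↦ tendsto_inv_smul_pow_apply_of_hasCompactSupport hT (fun t ↦ (hw_pos t).le) hC
      hhigh hf)
    (fun g hg ↦ exists_tendsto_inv_smul_pow_apply hT hw_cont hw_pos hc hMδ hcw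
      (fun t ht ↦ (hlow t ht).1) hg)

theorem cesaro_hyper_transitive_of_weight
    (w : ℝ → ℝ) (hw_cont : Continuous w) (hw_pos : ∀ t, 0 < w t)
    (hw_bdd : ∃ C, ∀ t, w t ≤ C)
    (M δ K₁ K₂ : ℝ) (hM : 0 < M) (hδ : 0 < δ) (hK₁ : 0 < K₁) (hK₂ : 0 < K₂)
    (hMδ : 1 < M - δ)
    (hlow : ∀ t ≤ -K₁, M - δ ≤ w t ∧ w t ≤ M)
    (hhigh : ∀ t ≥ K₂, w t = 1)
    (T : C₀(ℝ, ℂ) →L[ℂ] C₀(ℝ, ℂ))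
    (hT : ∀ (f : C₀(ℝ, ℂ)) (t : ℝ), T f t = (w t : ℂ) * f (t - 1)) :
    IsCesaroHyperTransitive T :=
  cesaro_hyper_transitive_of_weight_general w hw_cont hw_pos hw_bdd M δ K₁ K₂ hMδ hlow hhigh T hT
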